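/- Suppose X₊ = AX + BU, where the data matrices X, X₊ ∈ ℝ^{n×N} and U ∈ ℝ^{m×N} are generated by a state trajectory, i.e., there exist vectors x₀, …, x_N ∈ ℝ^n and u₀, …, u_{N−1} ∈ ℝ^m with x_{k+1} = A x_k + B u_k for k = 0, …, N−1, X = [x₀ ⋯ x_{N−1}], X₊ = [x₁ ⋯ x_N], U = [u₀ ⋯ u_{N−1}]. If P is symmetric and the discrete-time LMI M₁ − (1/2)(M₂ + M₂^T) ⪯ 0 holds, then the data-driven LMI X₊^T P X₊ − X^T P X − (1/2)(M₃ + M₃^T) ⪯ 0 holds, where M₃ := (U − Σ C X)^T (C X₊ − C X). (That is, every trajectory of a system satisfying the model-based LMI produces data satisfying the data-driven LMI, so the data-driven criterion is necessary as well.) -/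

import Mathlib

/-!
Stack the data as `W = [X; U]`. Because `X₊ = A X + B U`, the congruence `Wᵀ M₁ W` is
`X₊ᵀ P X₊ - Xᵀ P X` and, for symmetric `Σ`, `Wᵀ M₂ W` is `M₃`. So the data-driven matrix is the
congruence `Wᵀ L W` of the model-based matrix `L`, and `zᵀ Wᵀ L W z = (W z)ᵀ L (W z) ≤ 0`.
-/

open Matrix

namespace Matrix

variable {R k l m n : Type*} [Fintype l] [Fintype m]

theorem dotProduct_transpose_mul_mul_mulVec [CommSemiring R] [Fintype n] (W : Matrix m n R)
    (M : Matrix m m R) (z : n → R) :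
    z ⬝ᵥ (Wᵀ * M * W) *ᵥ z = (W *ᵥ z) ⬝ᵥ M *ᵥ (W *ᵥ z) := by
  rw [← mulVec_mulVec, ← mulVec_mulVec, dotProduct_mulVec, vecMul_transpose]

theorem transpose_mul_sub_smul_add_transpose_mul [CommRing R] (W : Matrix m n R)
    (M N : Matrix m m R) (c : R) :
    Wᵀ * (M - c • (N + Nᵀ)) * W = Wᵀ * M * W - c • (Wᵀ * N * W + (Wᵀ * N * W)ᵀ) := by
  simp only [Matrix.mul_sub, Matrix.sub_mul, Matrix.mul_smul, Matrix.smul_mul, Matrix.mul_add,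
    Matrix.add_mul, transpose_mul, transpose_transpose, Matrix.mul_assoc]

theorem transpose_fromRows_mul_fromBlocks_mul_fromRows [CommSemiring R] (X : Matrix l k R)
    (U : Matrix m k R) (a : Matrix l l R) (b : Matrix l m R) (c : Matrix m l R)
    (d : Matrix m m R) :
    (fromRows X U)ᵀ * fromBlocks a b c d * fromRows X U
      = Xᵀ * a * X + Xᵀ * b * U + (Uᵀ * c * X + Uᵀ * d * U) := by
  rw [transpose_fromRows, fromCols_mul_fromBlocks, fromCols_mul_fromRows]
  simp only [Matrix.add_mul, Matrix.mul_assoc]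
  abel

end Matrix

section DataLMI

variable {R k l m : Type*} [CommRing R] [Fintype l] [Fintype m]
  (A : Matrix l l R) (B : Matrix l m R) (X : Matrix l k R) (U : Matrix m k R)

theorem transpose_fromRows_mul_lyapunovBlocks_mul_fromRows (P : Matrix l l R) :
    (fromRows X U)ᵀ * fromBlocks (Aᵀ * P * A - P) (Aᵀ * P * B) (Bᵀ * P * A) (Bᵀ * P * B)
        * fromRows X U
      = (A * X + B * U)ᵀ * P * (A * X + B * U) - Xᵀ * P * X := by
  rw [transpose_fromRows_mul_fromBlocks_mul_fromRows]
  simp only [transpose_add, transpose_mul, Matrix.add_mul, Matrix.mul_add, Matrix.mul_sub,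
    Matrix.sub_mul, Matrix.mul_assoc]
  abel

theorem transpose_fromRows_mul_supplyBlocks_mul_fromRows [DecidableEq l] (C : Matrix m l R)
    {Sg : Matrix m m R} (hSg : Sgᵀ = Sg) :
    (fromRows X U)ᵀ * fromBlocks (-(Cᵀ * Sg * (C * (A - 1)))) (-(Cᵀ * Sg * (C * B)))
        (C * (A - 1)) (C * B) * fromRows X U
      = (U - Sg * C * X)ᵀ * (C * (A * X + B * U) - C * X) := by
  rw [transpose_fromRows_mul_fromBlocks_mul_fromRows]
  simp only [transpose_sub, transpose_mul, hSg, Matrix.mul_add, Matrix.mul_sub,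
    Matrix.sub_mul, Matrix.neg_mul, Matrix.mul_neg, Matrix.mul_one, Matrix.mul_assoc]
  abel

end DataLMI

theorem model_lmi_implies_data_lmi_general
    {n m N : ℕ}
    (A : Matrix (Fin n) (Fin n) ℝ) (B : Matrix (Fin n) (Fin m) ℝ)
    (C : Matrix (Fin m) (Fin n) ℝ) (Sg : Matrix (Fin m) (Fin m) ℝ)
    (P : Matrix (Fin n) (Fin n) ℝ) (hSg : Sgᵀ = Sg)
    (X Xp : Matrix (Fin n) (Fin N) ℝ) (U : Matrix (Fin m) (Fin N) ℝ)
    (hdata : Xp = A * X + B * U)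
    (hLMI : ∀ z : Fin n ⊕ Fin m → ℝ,
      z ⬝ᵥ (fromBlocks (Aᵀ * P * A - P) (Aᵀ * P * B) (Bᵀ * P * A) (Bᵀ * P * B)
        - (1 / 2 : ℝ) •
          (fromBlocks (-(Cᵀ * Sg * (C * (A - 1)))) (-(Cᵀ * Sg * (C * B)))
              (C * (A - 1)) (C * B)
            + (fromBlocks (-(Cᵀ * Sg * (C * (A - 1)))) (-(Cᵀ * Sg * (C * B)))
                (C * (A - 1)) (C * B))ᵀ)) *ᵥ z ≤ 0) :
    ∀ z : Fin N → ℝ,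
      z ⬝ᵥ (Xpᵀ * P * Xp - Xᵀ * P * X
        - (1 / 2 : ℝ) • ((U - Sg * C * X)ᵀ * (C * Xp - C * X)
            + ((U - Sg * C * X)ᵀ * (C * Xp - C * X))ᵀ)) *ᵥ z ≤ 0 := by
  intro z
  rw [hdata, ← transpose_fromRows_mul_lyapunovBlocks_mul_fromRows A B X U P,
    ← transpose_fromRows_mul_supplyBlocks_mul_fromRows A B X U C hSg,
    ← transpose_mul_sub_smul_add_transpose_mul, dotProduct_transpose_mul_mul_mulVec]
  exact hLMI _

/-- Necessity of the data-driven LMI: if the data matrices come from a trajectory of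
`x_{k+1} = A x_k + B u_k` (so `X₊ = AX + BU`), `P` is symmetric, and the model-based
LMI `M₁ − (1/2)(M₂ + M₂ᵀ) ⪯ 0` holds, then the data-driven LMI
`X₊ᵀ P X₊ − Xᵀ P X − (1/2)(M₃ + M₃ᵀ) ⪯ 0` holds. -/
theorem model_lmi_implies_data_lmi
    {n m N : ℕ} (hn : 0 < n) (hm : 0 < m) (hN : 0 < N)
    (A : Matrix (Fin n) (Fin n) ℝ) (B : Matrix (Fin n) (Fin m) ℝ)
    (C : Matrix (Fin m) (Fin n) ℝ) (Sg : Matrix (Fin m) (Fin m) ℝ)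
    (P : Matrix (Fin n) (Fin n) ℝ) (hSg : Sgᵀ = Sg) (hP : Pᵀ = P)
    (X Xp : Matrix (Fin n) (Fin N) ℝ) (U : Matrix (Fin m) (Fin N) ℝ)
    (x : Fin (N + 1) → Fin n → ℝ) (u : Fin N → Fin m → ℝ)
    (hrec : ∀ k : Fin N, x k.succ = A *ᵥ x k.castSucc + B *ᵥ u k)
    (hX : ∀ (i : Fin n) (j : Fin N), X i j = x j.castSucc i)
    (hXp : ∀ (i : Fin n) (j : Fin N), Xp i j = x j.succ i)
    (hU : ∀ (i : Fin m) (j : Fin N), U i j = u j i)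
    (hdata : Xp = A * X + B * U)
    (hLMI : ∀ z : Fin n ⊕ Fin m → ℝ,
      z ⬝ᵥ (fromBlocks (Aᵀ * P * A - P) (Aᵀ * P * B) (Bᵀ * P * A) (Bᵀ * P * B)
        - (1 / 2 : ℝ) •
          (fromBlocks (-(Cᵀ * Sg * (C * (A - 1)))) (-(Cᵀ * Sg * (C * B)))
              (C * (A - 1)) (C * B)
            + (fromBlocks (-(Cᵀ * Sg * (C * (A - 1)))) (-(Cᵀ * Sg * (C * B)))
                (C * (A - 1)) (C * B))ᵀ)) *ᵥ z ≤ 0) :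
    ∀ z : Fin N → ℝ,
      z ⬝ᵥ (Xpᵀ * P * Xp - Xᵀ * P * X
        - (1 / 2 : ℝ) • ((U - Sg * C * X)ᵀ * (C * Xp - C * X)
            + ((U - Sg * C * X)ᵀ * (C * Xp - C * X))ᵀ)) *ᵥ z ≤ 0 :=
  model_lmi_implies_data_lmi_general A B C Sg P hSg X Xp U hdata hLMI
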